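/- Main error estimate (Proposition 4.1): if (u_1,...,u_m) is a C² minimizer of the segregation energy satisfying Δû_l ≤ f_l(·,u_l) everywhere, Δu_l = f_l(·,u_l) on {u_l > 0}, and (u_h^1,...,u_h^m) is a solution of the finite difference system with the same boundary values, where each f_l(z,·) is nondecreasing, then for every l, ‖u_l − u_h^l‖_{L∞(Ω_h)} ≤ C_Ω · ∑_{l=1}^m ‖L_h u_l − Δu_l‖_{L∞(Ω)}, with a constant C_Ω = a² depending only on the domain Ω = (0,a)². -/

import Mathlib

/-- Continuous Laplacian of a function on `ℝ²`, as the sum of pure second derivatives. -/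
noncomputable def Lap2 (v : ℝ × ℝ → ℝ) (p : ℝ × ℝ) : ℝ :=
  iteratedDeriv 2 (fun t => v (t, p.2)) p.1 + iteratedDeriv 2 (fun t => v (p.1, t)) p.2

/-- 5-point stencil Laplacian with step `h`, for functions on `ℝ²`. -/
noncomputable def LhC (h : ℝ) (v : ℝ × ℝ → ℝ) (p : ℝ × ℝ) : ℝ :=
  (v (p.1 - h, p.2) + v (p.1 + h, p.2) - 4 * v p + v (p.1, p.2 - h) + v (p.1, p.2 + h)) / h ^ 2

/-- The 5-point discrete Laplacian on grid functions (mesh size `h`). -/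
noncomputable def dLap (h : ℝ) (v : ℤ × ℤ → ℝ) (z : ℤ × ℤ) : ℝ :=
  (v (z.1 - 1, z.2) + v (z.1 + 1, z.2) - 4 * v z + v (z.1, z.2 - 1) + v (z.1, z.2 + 1)) / h ^ 2

/-- A point of the uniform grid `{0,...,N}²`. -/
def onGrid (N : ℕ) (z : ℤ × ℤ) : Prop := 0 ≤ z.1 ∧ z.1 ≤ N ∧ 0 ≤ z.2 ∧ z.2 ≤ N

/-- An interior point of the uniform grid `{0,...,N}²`. -/
def inGrid (N : ℕ) (z : ℤ × ℤ) : Prop :=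
  1 ≤ z.1 ∧ z.1 ≤ (N : ℤ) - 1 ∧ 1 ≤ z.2 ∧ z.2 ≤ (N : ℤ) - 1

/-!
Both the discrete solution `u_h` and the restriction of `u` to the grid solve the discrete
segregation system up to a defect: `0` for `u_h`, and `∑ K` for `u`, because `û_l` is a fixed
linear combination of the `u_q`, so `L_h û_l - Δû_l` is controlled by the consistency errors of
all components. Two such approximate solutions `V`, `W` with defects `g₁`, `g₂` and equal
boundary values are compared through the barrier `φ(x, y) = x (a - x) / 2`, for which
`L_h φ = -1` and `0 ≤ φ ≤ a² / 8`. For `c > g₁ + g₂`, a positive maximum of `±(V̂_l - Ŵ_l) - c φ`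
over all `l`, both signs and the grid is interior; say it is `V̂_l - Ŵ_l - c φ` at `z₀`. If
`V_l(z₀) > 0`, the equation for `V`, the inequality for `W` and the monotonicity of `f_l`
(as `W_l ≤ V_l` at `z₀`) give `c ≤ g₁ + g₂`. If `V_l(z₀) = 0`, then `Ŵ_l(z₀) < 0`, so some
`W_r(z₀) > 0`, and by segregation `Ŵ_r - V̂_r - c φ` attains the maximum there as well, which
is the first case with `V` and `W` exchanged.
Finally `u_l = max(û_l, 0)` for nonnegative segregated families, so
`|u_l - u_h^l| ≤ |û_l - û_h^l| ≤ (∑ K) φ ≤ a² ∑ K`.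
-/

open Finset Filter Topology

section Hat

variable {ι α : Type*} {v w : ι → α → ℝ} {l r : ι} {x : α}

theorem eq_zero_of_pos_of_ne (hseg : ∀ p q, p ≠ q → v p x * v q x = 0) (hpos : 0 < v r x)
    (hlr : l ≠ r) : v l x = 0 :=
  (mul_eq_zero.1 (hseg l r hlr)).resolve_right hpos.ne'

variable [Fintype ι] [DecidableEq ι]

/-- The paper's `û_l = u_l - ∑_{q ≠ l} u_q`. -/
def hat (v : ι → α → ℝ) (l : ι) (x : α) : ℝ := v l x - ∑ q ∈ univ.erase l, v q x

theorem hat_le_self (h0 : ∀ q, 0 ≤ v q x) : hat v l x ≤ v l x :=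
  sub_le_self _ (sum_nonneg fun q _ => h0 q)

theorem hat_eq_self_of_pos (hseg : ∀ p q, p ≠ q → v p x * v q x = 0) (hpos : 0 < v l x) :
    hat v l x = v l x := by
  rw [hat, sum_eq_zero fun q hq => eq_zero_of_pos_of_ne hseg hpos (ne_of_mem_erase hq), sub_zero]

theorem hat_eq_neg_of_pos (hseg : ∀ p q, p ≠ q → v p x * v q x = 0) (hpos : 0 < v r x)
    (hlr : l ≠ r) : hat v l x = -v r x := by
  rw [hat, sum_eq_single_of_mem r (mem_erase.2 ⟨hlr.symm, mem_univ r⟩)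
    fun q _ hqr => eq_zero_of_pos_of_ne hseg hpos hqr, eq_zero_of_pos_of_ne hseg hpos hlr, zero_sub]

theorem hat_add_hat_nonpos (h0 : ∀ q, 0 ≤ v q x) (hrl : r ≠ l) : hat v r x + hat v l x ≤ 0 := by
  have hr : v l x ≤ ∑ q ∈ univ.erase r, v q x :=
    single_le_sum (fun q _ => h0 q) (mem_erase.2 ⟨hrl.symm, mem_univ l⟩)
  have hl : v r x ≤ ∑ q ∈ univ.erase l, v q x :=
    single_le_sum (fun q _ => h0 q) (mem_erase.2 ⟨hrl, mem_univ r⟩)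
  simp only [hat]
  linarith

theorem eq_max_hat (h0 : ∀ q, 0 ≤ v q x) (hseg : ∀ p q, p ≠ q → v p x * v q x = 0) :
    v l x = max (hat v l x) 0 := by
  rcases (h0 l).lt_or_eq with hpos | hzero
  · rw [hat_eq_self_of_pos hseg hpos, max_eq_left hpos.le]
  · rw [← hzero, max_eq_right (hzero ▸ hat_le_self h0)]

theorem abs_sub_le_abs_hat_sub (hv0 : ∀ q, 0 ≤ v q x)
    (hvseg : ∀ p q, p ≠ q → v p x * v q x = 0) (hw0 : ∀ q, 0 ≤ w q x)
    (hwseg : ∀ p q, p ≠ q → w p x * w q x = 0) :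
    |v l x - w l x| ≤ |hat v l x - hat w l x| :=
  calc |v l x - w l x| = |max (hat v l x) 0 - max (hat w l x) 0| := by
        rw [← eq_max_hat hv0 hvseg, ← eq_max_hat hw0 hwseg]
    _ ≤ |hat v l x - hat w l x| := abs_max_sub_max_le_abs _ _ _

theorem exists_pos_hat_sub_le (hv0 : ∀ q, 0 ≤ v q x) (hw0 : ∀ q, 0 ≤ w q x)
    (hwseg : ∀ p q, p ≠ q → w p x * w q x = 0) (hvl : v l x = 0)
    (hlt : hat w l x < hat v l x) :
    ∃ r, 0 < w r x ∧ hat v l x - hat w l x ≤ hat w r x - hat v r x := by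
  have hsum : ∑ q ∈ univ.erase l, (0 : ℝ) < ∑ q ∈ univ.erase l, w q x := by
    have := hat_le_self (l := l) hv0
    simp only [hat] at hlt this
    rw [sum_const_zero]; linarith [hw0 l]
  obtain ⟨r, hr, hwr⟩ := exists_lt_of_sum_lt hsum
  have hrl := ne_of_mem_erase hr
  refine ⟨r, hwr, ?_⟩
  rw [hat_eq_self_of_pos hwseg hwr, hat_eq_neg_of_pos hwseg hwr hrl.symm]
  linarith [hat_add_hat_nonpos (l := l) hv0 hrl]

theorem hat_sub_hat : hat v l x - hat w l x = hat (fun q y => v q y - w q y) l x := by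
  simp only [hat, sum_sub_distrib]
  ring

theorem abs_hat_le_sum_abs : |hat v l x| ≤ ∑ q, |v q x| := by
  rw [← add_sum_erase _ _ (mem_univ l), hat]
  calc |v l x - ∑ q ∈ univ.erase l, v q x|
      ≤ |v l x| + |∑ q ∈ univ.erase l, v q x| := abs_sub _ _
    _ ≤ |v l x| + ∑ q ∈ univ.erase l, |v q x| := by gcongr; exact abs_sum_le_sum_abs _ _

theorem hat_eventuallyEq_self [TopologicalSpace α] (hcont : ContinuousAt (v l) x)
    (hpos : 0 < v l x) (hseg : ∀ᶠ y in 𝓝 x, ∀ p q, p ≠ q → v p y * v q y = 0) :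
    hat v l =ᶠ[𝓝 x] v l := by
  filter_upwards [hseg, hcont.eventually (lt_mem_nhds hpos)] with y hy hy'
  exact hat_eq_self_of_pos hy hy'

end Hat

section Laplacians

variable {ι : Type*} [Fintype ι] [DecidableEq ι]

theorem Lap2_congr_of_eventuallyEq {v w : ℝ × ℝ → ℝ} {p : ℝ × ℝ} (hvw : v =ᶠ[𝓝 p] w) :
    Lap2 v p = Lap2 w p := by
  have h₁ : Tendsto (fun t : ℝ => (t, p.2)) (𝓝 p.1) (𝓝 p) :=
    (Continuous.prodMk_left p.2).tendsto' _ _ rfl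
  have h₂ : Tendsto (fun t : ℝ => (p.1, t)) (𝓝 p.2) (𝓝 p) :=
    (Continuous.prodMk_right p.1).tendsto' _ _ rfl
  have e₁ : (fun t => v (t, p.2)) =ᶠ[𝓝 p.1] fun t => w (t, p.2) := hvw.comp_tendsto h₁
  have e₂ : (fun t => v (p.1, t)) =ᶠ[𝓝 p.2] fun t => w (p.1, t) := hvw.comp_tendsto h₂
  rw [Lap2, Lap2, e₁.iteratedDeriv_eq, e₂.iteratedDeriv_eq]

theorem Lap2_hat {u : ι → ℝ × ℝ → ℝ} (hu : ∀ q, ContDiff ℝ 2 (u q)) (l : ι) (p : ℝ × ℝ) :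
    Lap2 (hat u l) p = hat (fun q => Lap2 (u q)) l p := by
  have h₁ : ∀ q, ContDiff ℝ 2 fun t : ℝ => u q (t, p.2) :=
    fun q => (hu q).comp (contDiff_id.prodMk contDiff_const)
  have h₂ : ∀ q, ContDiff ℝ 2 fun t : ℝ => u q (p.1, t) :=
    fun q => (hu q).comp (contDiff_const.prodMk contDiff_id)
  simp only [Lap2, hat]
  rw [iteratedDeriv_fun_sub (h₁ l).contDiffAt (ContDiff.sum fun q _ => h₁ q).contDiffAt,
    iteratedDeriv_fun_sub (h₂ l).contDiffAt (ContDiff.sum fun q _ => h₂ q).contDiffAt,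
    iteratedDeriv_fun_sum fun q _ => (h₁ q).contDiffAt,
    iteratedDeriv_fun_sum fun q _ => (h₂ q).contDiffAt, sum_add_distrib]
  ring

theorem LhC_hat (h : ℝ) (u : ι → ℝ × ℝ → ℝ) (l : ι) (p : ℝ × ℝ) :
    LhC h (hat u l) p = hat (fun q => LhC h (u q)) l p := by
  simp only [LhC, hat, ← sum_div, sum_add_distrib, sum_sub_distrib, ← mul_sum]
  ring

end Laplacians

section Grid

noncomputable def gridPt (h : ℝ) (z : ℤ × ℤ) : ℝ × ℝ := ((z.1 : ℝ) * h, (z.2 : ℝ) * h)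

noncomputable def barrier (a h : ℝ) (z : ℤ × ℤ) : ℝ := (z.1 : ℝ) * h * (a - (z.1 : ℝ) * h) / 2

variable {N : ℕ} {a h : ℝ} {z : ℤ × ℤ}

theorem dLap_comp_gridPt (v : ℝ × ℝ → ℝ) :
    dLap h (fun w => v (gridPt h w)) z = LhC h v (gridPt h z) := by
  simp only [dLap, LhC, gridPt, Int.cast_sub, Int.cast_add, Int.cast_one, sub_mul, add_mul,
    one_mul]

theorem dLap_sub_sub_mul (A B C : ℤ × ℤ → ℝ) (c : ℝ) :
    dLap h (fun w => A w - B w - c * C w) z = dLap h A z - dLap h B z - c * dLap h C z := by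
  simp only [dLap]
  ring

theorem dLap_barrier (hh : h ≠ 0) : dLap h (barrier a h) z = -1 := by
  simp only [dLap, barrier]
  push_cast
  field_simp
  ring

theorem barrier_le : barrier a h z ≤ a ^ 2 / 8 := by
  simp only [barrier]
  nlinarith [sq_nonneg ((z.1 : ℝ) * h - a / 2)]

theorem onGrid_of_inGrid (hz : inGrid N z) : onGrid N z := by
  obtain ⟨h1, h2, h3, h4⟩ := hz
  exact ⟨by omega, by omega, by omega, by omega⟩

theorem cast_mul_mem_Icc {k : ℤ} (hh : 0 ≤ h) (h0 : 0 ≤ k) (hN : k ≤ N) :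
    (k : ℝ) * h ∈ Set.Icc 0 ((N : ℝ) * h) :=
  ⟨by positivity, mul_le_mul_of_nonneg_right (by exact_mod_cast hN) hh⟩

theorem cast_mul_mem_Ioo {k : ℤ} (hh : 0 < h) (h1 : 1 ≤ k) (hN : k ≤ (N : ℤ) - 1) :
    (k : ℝ) * h ∈ Set.Ioo 0 ((N : ℝ) * h) :=
  ⟨mul_pos (by exact_mod_cast h1) hh,
    mul_lt_mul_of_pos_right (by exact_mod_cast (by omega : k < N)) hh⟩

theorem gridPt_mem_Icc (hh : 0 ≤ h) (hha : (N : ℝ) * h = a) (hz : onGrid N z) :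
    gridPt h z ∈ Set.Icc 0 a ×ˢ Set.Icc 0 a := by
  subst hha
  exact ⟨cast_mul_mem_Icc hh hz.1 hz.2.1, cast_mul_mem_Icc hh hz.2.2.1 hz.2.2.2⟩

theorem gridPt_mem_Ioo (hh : 0 < h) (hha : (N : ℝ) * h = a) (hz : inGrid N z) :
    gridPt h z ∈ Set.Ioo 0 a ×ˢ Set.Ioo 0 a := by
  subst hha
  exact ⟨cast_mul_mem_Ioo hh hz.1 hz.2.1, cast_mul_mem_Ioo hh hz.2.2.1 hz.2.2.2⟩

theorem barrier_nonneg (hh : 0 ≤ h) (hha : (N : ℝ) * h = a) (hz : onGrid N z) :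
    0 ≤ barrier a h z := by
  obtain ⟨⟨hx0, hxa⟩, -⟩ := gridPt_mem_Icc hh hha hz
  exact div_nonneg (mul_nonneg hx0 (sub_nonneg.2 hxa)) zero_le_two

theorem dLap_nonpos_of_forall_le {v : ℤ × ℤ → ℝ} (hz : inGrid N z)
    (hmax : ∀ w, onGrid N w → v w ≤ v z) : dLap h v z ≤ 0 := by
  obtain ⟨h1, h2, h3, h4⟩ := hz
  have := hmax (z.1 - 1, z.2) ⟨by omega, by omega, by omega, by omega⟩
  have := hmax (z.1 + 1, z.2) ⟨by omega, by omega, by omega, by omega⟩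
  have := hmax (z.1, z.2 - 1) ⟨by omega, by omega, by omega, by omega⟩
  have := hmax (z.1, z.2 + 1) ⟨by omega, by omega, by omega, by omega⟩
  exact div_nonpos_of_nonpos_of_nonneg (by linarith) (sq_nonneg h)

end Grid

section Comparison

variable {ι : Type*} [Fintype ι] [DecidableEq ι]

structure IsApproxDiscreteSol (N : ℕ) (h : ℝ) (f : ι → ℝ × ℝ → ℝ → ℝ) (g : ℝ)
    (V : ι → ℤ × ℤ → ℝ) : Prop where
  nonneg : ∀ l z, onGrid N z → 0 ≤ V l z
  seg : ∀ z, onGrid N z → ∀ p q, p ≠ q → V p z * V q z = 0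
  sub : ∀ l z, inGrid N z → dLap h (hat V l) z ≤ f l (gridPt h z) (V l z) + g
  super : ∀ l z, inGrid N z → 0 < V l z → f l (gridPt h z) (V l z) - g ≤ dLap h (hat V l) z

namespace IsApproxDiscreteSol

variable {N : ℕ} {a h g₁ g₂ c : ℝ} {f : ι → ℝ × ℝ → ℝ → ℝ} {V W : ι → ℤ × ℤ → ℝ}

theorem le_add_of_forall_le (hV : IsApproxDiscreteSol N h f g₁ V)
    (hW : IsApproxDiscreteSol N h f g₂ W) (hf : ∀ l p, Monotone (f l p)) (hh : h ≠ 0)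
    {l : ι} {z₀ : ℤ × ℤ} (hz₀ : inGrid N z₀) (hpos : 0 < V l z₀)
    (hle : hat W l z₀ ≤ hat V l z₀)
    (hmax : ∀ z, onGrid N z → hat V l z - hat W l z - c * barrier a h z ≤
      hat V l z₀ - hat W l z₀ - c * barrier a h z₀) :
    c ≤ g₁ + g₂ := by
  have hon := onGrid_of_inGrid hz₀
  have hlap := dLap_nonpos_of_forall_le (h := h) hz₀ hmax
  rw [dLap_sub_sub_mul, dLap_barrier hh] at hlap
  have hWV : W l z₀ ≤ V l z₀ := by
    rcases (hW.nonneg l z₀ hon).lt_or_eq with hWpos | hW0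
    · calc W l z₀ = hat W l z₀ := (hat_eq_self_of_pos (hW.seg z₀ hon) hWpos).symm
        _ ≤ hat V l z₀ := hle
        _ ≤ V l z₀ := hat_le_self fun q => hV.nonneg q z₀ hon
    · exact hW0 ▸ hpos.le
  linarith [hV.super l z₀ hz₀ hpos, hW.sub l z₀ hz₀, hf l (gridPt h z₀) hWV]

theorem false_of_max_pos (hV : IsApproxDiscreteSol N h f g₁ V)
    (hW : IsApproxDiscreteSol N h f g₂ W) (hf : ∀ l p, Monotone (f l p)) (hh : 0 < h)
    (hha : (N : ℝ) * h = a) (hbdry : ∀ l z, onGrid N z → ¬inGrid N z → V l z = W l z)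
    (hc : g₁ + g₂ < c) (hc0 : 0 ≤ c) {l₀ : ι} {z₀ : ℤ × ℤ} (hz₀ : onGrid N z₀)
    (hpos : 0 < hat V l₀ z₀ - hat W l₀ z₀ - c * barrier a h z₀)
    (hmax : ∀ l z, onGrid N z →
      hat V l z - hat W l z - c * barrier a h z ≤ hat V l₀ z₀ - hat W l₀ z₀ - c * barrier a h z₀ ∧
      hat W l z - hat V l z - c * barrier a h z ≤ hat V l₀ z₀ - hat W l₀ z₀ - c * barrier a h z₀) :
    False := by
  have hcφ := mul_nonneg hc0 (barrier_nonneg hh.le hha hz₀)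
  have hin : inGrid N z₀ := by
    by_contra hb
    have : hat V l₀ z₀ = hat W l₀ z₀ := by simp only [hat, hbdry _ z₀ hz₀ hb]
    linarith
  rcases (hV.nonneg l₀ z₀ hz₀).lt_or_eq with hVpos | hV0
  · have := hV.le_add_of_forall_le hW hf hh.ne' hin hVpos (by linarith)
      fun z hz => (hmax l₀ z hz).1
    linarith
  · obtain ⟨r, hWr, hswitch⟩ := exists_pos_hat_sub_le (fun q => hV.nonneg q z₀ hz₀)
      (fun q => hW.nonneg q z₀ hz₀) (hW.seg z₀ hz₀) hV0.symm (by linarith)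
    have := hW.le_add_of_forall_le hV hf hh.ne' hin hWr (by linarith)
      fun z hz => (hmax r z hz).2.trans (by linarith)
    linarith

theorem abs_hat_sub_le_of_lt (hV : IsApproxDiscreteSol N h f g₁ V)
    (hW : IsApproxDiscreteSol N h f g₂ W) (hf : ∀ l p, Monotone (f l p)) (hh : 0 < h)
    (hha : (N : ℝ) * h = a) (hbdry : ∀ l z, onGrid N z → ¬inGrid N z → V l z = W l z)
    (hc : g₁ + g₂ < c) (hc0 : 0 ≤ c) (l : ι) (z : ℤ × ℤ) (hz : onGrid N z) :
    |hat V l z - hat W l z| ≤ c * barrier a h z := by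
  set err : ι × (ℤ × ℤ) → ℝ := fun t =>
    max (hat V t.1 t.2 - hat W t.1 t.2 - c * barrier a h t.2)
      (hat W t.1 t.2 - hat V t.1 t.2 - c * barrier a h t.2)
  have hgrid : ∀ t : ι × (ℤ × ℤ), t ∈ univ ×ˢ Icc ((0 : ℤ), (0 : ℤ)) ((N : ℤ), (N : ℤ)) ↔
      onGrid N t.2 := by
    intro t
    simp only [mem_product, mem_univ, true_and, mem_Icc, Prod.le_def, onGrid]
    tauto
  obtain ⟨⟨l₀, z₀⟩, hmem, hmax⟩ := exists_max_image _ err ⟨(l, z), (hgrid (l, z)).2 hz⟩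
  have hmax' : ∀ l z, onGrid N z →
      hat V l z - hat W l z - c * barrier a h z ≤ err (l₀, z₀) ∧
      hat W l z - hat V l z - c * barrier a h z ≤ err (l₀, z₀) := fun l z hz =>
    max_le_iff.1 (hmax (l, z) ((hgrid (l, z)).2 hz))
  have hz₀ : onGrid N z₀ := (hgrid _).1 hmem
  have hM : err (l₀, z₀) ≤ 0 := by
    by_contra! hpos
    rcases max_choice (hat V l₀ z₀ - hat W l₀ z₀ - c * barrier a h z₀)
      (hat W l₀ z₀ - hat V l₀ z₀ - c * barrier a h z₀) with hVW | hWV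
    · rw [show err (l₀, z₀) = _ from hVW] at hpos hmax'
      exact hV.false_of_max_pos hW hf hh hha hbdry hc hc0 hz₀ hpos hmax'
    · rw [show err (l₀, z₀) = _ from hWV] at hpos hmax'
      exact hW.false_of_max_pos hV hf hh hha (fun l z hz hb => (hbdry l z hz hb).symm)
        (by linarith) hc0 hz₀ hpos fun l z hz => (hmax' l z hz).symm
  obtain ⟨h₁, h₂⟩ := max_le_iff.1 ((hmax (l, z) ((hgrid (l, z)).2 hz)).trans hM)
  rw [abs_sub_le_iff]
  constructor <;> linarith

theorem abs_hat_sub_le (hV : IsApproxDiscreteSol N h f g₁ V)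
    (hW : IsApproxDiscreteSol N h f g₂ W) (hf : ∀ l p, Monotone (f l p)) (hh : 0 < h)
    (hha : (N : ℝ) * h = a) (hbdry : ∀ l z, onGrid N z → ¬inGrid N z → V l z = W l z)
    (hg : 0 ≤ g₁ + g₂) (l : ι) (z : ℤ × ℤ) (hz : onGrid N z) :
    |hat V l z - hat W l z| ≤ (g₁ + g₂) * barrier a h z := by
  have hlim : Tendsto (fun ε => (g₁ + g₂ + ε) * barrier a h z) (𝓝[>] 0)
      (𝓝 ((g₁ + g₂) * barrier a h z)) := by
    apply tendsto_nhdsWithin_of_tendsto_nhds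
    have hcont : Continuous fun ε : ℝ => (g₁ + g₂ + ε) * barrier a h z := by fun_prop
    simpa using hcont.tendsto 0
  refine ge_of_tendsto hlim (eventually_nhdsWithin_of_forall fun ε (hε : 0 < ε) => ?_)
  exact hV.abs_hat_sub_le_of_lt hW hf hh hha hbdry (by linarith) (by linarith) l z hz

end IsApproxDiscreteSol

end Comparison

theorem isApproxDiscreteSol_comp_gridPt {ι : Type*} [Fintype ι] [DecidableEq ι] {N : ℕ}
    {a h : ℝ} (hh : 0 < h) (hha : (N : ℝ) * h = a) {f : ι → ℝ × ℝ → ℝ → ℝ}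
    {u : ι → ℝ × ℝ → ℝ} (hC2 : ∀ l, ContDiff ℝ 2 (u l))
    (hupos : ∀ l p, p ∈ Set.Icc (0:ℝ) a ×ˢ Set.Icc (0:ℝ) a → 0 ≤ u l p)
    (huseg : ∀ p q : ι, ∀ x, x ∈ Set.Icc (0:ℝ) a ×ˢ Set.Icc (0:ℝ) a →
      p ≠ q → u p x * u q x = 0)
    (hsublap : ∀ l p, p ∈ Set.Ioo (0:ℝ) a ×ˢ Set.Ioo (0:ℝ) a →
      Lap2 (hat u l) p ≤ f l p (u l p))
    (heqlap : ∀ l p, p ∈ Set.Ioo (0:ℝ) a ×ˢ Set.Ioo (0:ℝ) a → 0 < u l p →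
      Lap2 (u l) p = f l p (u l p))
    {K : ι → ℝ} (hK : ∀ l p, p ∈ Set.Ioo (0:ℝ) a ×ˢ Set.Ioo (0:ℝ) a →
      |LhC h (u l) p - Lap2 (u l) p| ≤ K l) :
    IsApproxDiscreteSol N h f (∑ l, K l) fun l z => u l (gridPt h z) := by
  have hΩ : Set.Ioo (0:ℝ) a ×ˢ Set.Ioo (0:ℝ) a ⊆ Set.Icc 0 a ×ˢ Set.Icc 0 a :=
    Set.prod_mono Set.Ioo_subset_Icc_self Set.Ioo_subset_Icc_self
  have hcons : ∀ l p, p ∈ Set.Ioo (0:ℝ) a ×ˢ Set.Ioo (0:ℝ) a →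
      |LhC h (hat u l) p - Lap2 (hat u l) p| ≤ ∑ q, K q := fun l p hp =>
    calc |LhC h (hat u l) p - Lap2 (hat u l) p|
        = |hat (fun q y => LhC h (u q) y - Lap2 (u q) y) l p| := by
          rw [LhC_hat, Lap2_hat hC2, hat_sub_hat]
      _ ≤ ∑ q, |LhC h (u q) p - Lap2 (u q) p| := abs_hat_le_sum_abs
      _ ≤ ∑ q, K q := sum_le_sum fun q _ => hK q p hp
  have hcomp : ∀ l z, dLap h (hat (fun l z => u l (gridPt h z)) l) z =
      LhC h (hat u l) (gridPt h z) := fun l _ => dLap_comp_gridPt (hat u l)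
  refine ⟨fun l z hz => hupos l _ (gridPt_mem_Icc hh.le hha hz),
    fun z hz p q hpq => huseg p q _ (gridPt_mem_Icc hh.le hha hz) hpq, fun l z hz => ?_,
    fun l z hz hpos => ?_⟩
  · have hp := gridPt_mem_Ioo hh hha hz
    linarith [hcomp l z, (abs_le.1 (hcons l _ hp)).2, hsublap l _ hp]
  · have hp := gridPt_mem_Ioo hh hha hz
    have hseg : ∀ᶠ y in 𝓝 (gridPt h z), ∀ p q, p ≠ q → u p y * u q y = 0 := by
      filter_upwards [(isOpen_Ioo.prod isOpen_Ioo).mem_nhds hp] with y hy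
      exact fun p q hpq => huseg p q y (hΩ hy) hpq
    have hlap : Lap2 (hat u l) (gridPt h z) = f l (gridPt h z) (u l (gridPt h z)) := by
      rw [← heqlap l _ hp hpos]
      exact Lap2_congr_of_eventuallyEq
        (hat_eventuallyEq_self (hC2 l).continuous.continuousAt hpos hseg)
    linarith [hcomp l z, (abs_le.1 (hcons l _ hp)).1]

/-- Main error estimate (Proposition 4.1): for a `C²` nonnegative segregated minimizer
family `u` (satisfying `Δû_l ≤ f_l(·,u_l)` on `Ω` and `Δu_l = f_l(·,u_l)` on
`{u_l > 0}`) and a discrete solution family `u_h` with the same boundary values,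
`f_l(z,·)` nondecreasing, one has
`‖u_l - u_h^l‖_{L∞(Ω_h)} ≤ a² ∑_l ‖L_h u_l - Δu_l‖_{L∞(Ω)}`. -/
theorem stmt_16 (m N : ℕ) (hN : 1 ≤ N) (a h : ℝ) (ha : 0 < a) (hh : h = a / N)
    (f : Fin m → ℝ × ℝ → ℝ → ℝ) (hfmono : ∀ l p, Monotone (f l p))
    (u : Fin m → ℝ × ℝ → ℝ) (hC2 : ∀ l, ContDiff ℝ 2 (u l))
    (hupos : ∀ l p, p ∈ Set.Icc (0:ℝ) a ×ˢ Set.Icc (0:ℝ) a → 0 ≤ u l p)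
    (huseg : ∀ p q : Fin m, ∀ x, x ∈ Set.Icc (0:ℝ) a ×ˢ Set.Icc (0:ℝ) a →
      p ≠ q → u p x * u q x = 0)
    (uhat : Fin m → ℝ × ℝ → ℝ)
    (huhat : ∀ l p, uhat l p = u l p - ∑ q ∈ Finset.univ.erase l, u q p)
    (hsublap : ∀ l p, p ∈ Set.Ioo (0:ℝ) a ×ˢ Set.Ioo (0:ℝ) a →
      Lap2 (uhat l) p ≤ f l p (u l p))
    (heqlap : ∀ l p, p ∈ Set.Ioo (0:ℝ) a ×ˢ Set.Ioo (0:ℝ) a → 0 < u l p →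
      Lap2 (u l) p = f l p (u l p))
    (uh : Fin m → ℤ × ℤ → ℝ)
    (huhpos : ∀ l z, onGrid N z → 0 ≤ uh l z)
    (huhseg : ∀ p q : Fin m, ∀ z, onGrid N z → p ≠ q → uh p z * uh q z = 0)
    (hbdry : ∀ l z, onGrid N z → ¬inGrid N z → uh l z = u l (z.1 * h, z.2 * h))
    (uhhat : Fin m → ℤ × ℤ → ℝ)
    (huhhat : ∀ l z, uhhat l z = uh l z - ∑ q ∈ Finset.univ.erase l, uh q z)
    (hdsub : ∀ l z, inGrid N z →
      dLap h (uhhat l) z ≤ f l (z.1 * h, z.2 * h) (uh l z))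
    (hdeq : ∀ l z, inGrid N z → 0 < uh l z →
      dLap h (uhhat l) z = f l (z.1 * h, z.2 * h) (uh l z))
    (K : Fin m → ℝ)
    (hK : ∀ l p, p ∈ Set.Ioo (0:ℝ) a ×ˢ Set.Ioo (0:ℝ) a →
      |LhC h (u l) p - Lap2 (u l) p| ≤ K l) :
    ∀ l : Fin m, ∀ z : ℤ × ℤ, onGrid N z →
      |u l (z.1 * h, z.2 * h) - uh l z| ≤ a ^ 2 * ∑ l', K l' := by
  intro l z hz
  have hh0 : 0 < h := by
    rw [hh]; exact div_pos ha (by exact_mod_cast hN)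
  have hha : (N : ℝ) * h = a := by
    rw [hh]; field_simp
  obtain rfl : uhat = hat u := funext fun l => funext (huhat l)
  obtain rfl : uhhat = hat uh := funext fun l => funext (huhhat l)
  have hK0 : ∀ l, 0 ≤ K l := fun l =>
    (abs_nonneg _).trans
      (hK l (a / 2, a / 2) ⟨⟨by linarith, by linarith⟩, by linarith, by linarith⟩)
  have hS : 0 ≤ ∑ l', K l' := sum_nonneg fun l' _ => hK0 l'
  have hU := isApproxDiscreteSol_comp_gridPt hh0 hha hC2 hupos huseg hsublap heqlap hK
  have hUh : IsApproxDiscreteSol N h f 0 uh := ⟨huhpos, fun z hz p q => huhseg p q z hz,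
    fun l z hz => by rw [add_zero]; exact hdsub l z hz,
    fun l z hz hpos => by rw [sub_zero]; exact (hdeq l z hz hpos).ge⟩
  calc |u l (z.1 * h, z.2 * h) - uh l z|
      ≤ |hat (fun l z => u l (gridPt h z)) l z - hat uh l z| :=
        abs_sub_le_abs_hat_sub (v := fun l z => u l (gridPt h z)) (fun q => hU.nonneg q z hz)
          (hU.seg z hz) (fun q => hUh.nonneg q z hz) (hUh.seg z hz)
    _ ≤ (∑ l', K l' + 0) * barrier a h z :=
        hU.abs_hat_sub_le hUh hfmono hh0 hha (fun l z hz hb => (hbdry l z hz hb).symm)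
          (by linarith) l z hz
    _ ≤ a ^ 2 * ∑ l', K l' := by
        rw [add_zero, mul_comm]
        exact mul_le_mul_of_nonneg_right (barrier_le.trans (by nlinarith)) hS
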